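/- Suppose a direct sum of chains D has at most countably many trivial (singleton) components and contains an infinite sequence (C_n)_{n<ω} of non-trivial components that is increasing with respect to embeddability (C_n embeds in C_{n+1} for all n). Then D has infinitely many siblings up to isomorphism. -/

import Mathlib

open Cardinal

/-- Two preorders are equimorphic (siblings) if each order-embeds into the other. -/
def Equimorphic (α : Type*) (β : Type*) [Preorder α] [Preorder β] : Prop :=
  Nonempty (α ↪o β) ∧ Nonempty (β ↪o α)

/-- The setoid identifying order-isomorphic equimorphic substructures. -/
def sibSetoid (α : Type*) [Preorder α] : Setoid {S : Set α // Equimorphic S α} :=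
  ⟨fun S T => Nonempty ((S : Set α) ≃o (T : Set α)),
    ⟨fun _ => ⟨OrderIso.refl _⟩, fun ⟨e⟩ => ⟨e.symm⟩, fun ⟨e⟩ ⟨f⟩ => ⟨e.trans f⟩⟩⟩

/-- The sibling number of a structure: the number of isomorphism classes of
substructures equimorphic to it (every sibling is isomorphic to such a substructure). -/
noncomputable def sibNumber (α : Type*) [Preorder α] : Cardinal :=
  #(Quotient (sibSetoid α))

/-! Let `S k` be `D` with its trivial components deleted and the chains `C (g 0), …, C (g (k-1))`
collapsed to single points. It is a substructure of `D`, and `D` embeds into it: the chain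
`C (g n)` goes into `C (g (k + 2n))`, the trivial components (countably many) into the chains
`C (g (k + 2m + 1))`, and every other component stays in place. The isolated points of `S k`,
an isomorphism invariant, are exactly its `k` collapsed chains, so the `S k` are pairwise
non-isomorphic siblings. -/

open Function Set

def isolatedPoints (α : Type*) [Preorder α] : Set α := {x | IsMin x ∧ IsMax x}

theorem OrderIso.image_isolatedPoints {α β : Type*} [Preorder α] [Preorder β] (e : α ≃o β) :
    e '' isolatedPoints α = isolatedPoints β := by
  ext y
  rw [e.image_eq_preimage_symm]
  simp only [isolatedPoints, mem_preimage, mem_ofPred_eq]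
  rw [← e.symm.isMin_apply, ← e.symm.isMax_apply]

theorem OrderIso.ncard_isolatedPoints {α β : Type*} [Preorder α] [Preorder β] (e : α ≃o β) :
    (isolatedPoints α).ncard = (isolatedPoints β).ncard := by
  rw [← e.image_isolatedPoints, ncard_image_of_injective _ e.injective]

theorem nonempty_orderEmbedding_of_le {α : ℕ → Type*} [∀ n, Preorder (α n)]
    (h : ∀ n, Nonempty (α n ↪o α (n + 1))) {m n : ℕ} (hmn : m ≤ n) : Nonempty (α m ↪o α n) := by
  induction n, hmn using Nat.le_induction with
  | base => exact ⟨RelEmbedding.refl _⟩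
  | succ n _ ih => exact ⟨ih.some.trans (h n).some⟩

namespace Sigma

variable {ι κ : Type*} {α : ι → Type*} {β : κ → Type*}

def _root_.OrderEmbedding.sigmaMap [∀ i, Preorder (α i)] [∀ j, Preorder (β j)] (f : ι ↪ κ)
    (g : ∀ i, α i ↪o β (f i)) : (Σ i, α i) ↪o Σ j, β j where
  toEmbedding := f.sigmaMap fun i => (g i).toEmbedding
  map_rel_iff' {x y} := by
    obtain ⟨i, a⟩ := x
    obtain ⟨j, b⟩ := y
    constructor
    · intro h
      obtain rfl : i = j := f.injective (le_def.1 h).1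
      exact mk_le_mk_iff.2 ((g i).le_iff_le.1 (mk_le_mk_iff.1 h))
    · rintro ⟨i, a, b, hab⟩
      exact mk_le_mk_iff.2 ((g i).le_iff_le.2 hab)

theorem nonempty_orderEmbedding_subtype [∀ i, Preorder (α i)] {S : Set (Σ i, α i)} {φ : ι → ι}
    (hφ : Injective φ) (hα : ∀ i, Nonempty (α i ↪o α (φ i))) (hS : Sigma.fst ⁻¹' range φ ⊆ S) :
    Nonempty ((Σ i, α i) ↪o S) :=
  ⟨RelEmbedding.codRestrict S (OrderEmbedding.sigmaMap ⟨φ, hφ⟩ fun i => (hα i).some)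
    fun x => hS ⟨x.1, rfl⟩⟩

variable [∀ i, LinearOrder (α i)]

theorem le_or_le_of_fst_eq {x y : Σ i, α i} (h : x.1 = y.1) : x ≤ y ∨ y ≤ x := by
  obtain ⟨i, a⟩ := x
  obtain ⟨j, b⟩ := y
  obtain rfl : i = j := h
  exact (le_total a b).imp mk_le_mk_iff.2 mk_le_mk_iff.2

theorem mem_isolatedPoints_iff {S : Set (Σ i, α i)} {x : S} :
    x ∈ isolatedPoints S ↔ ∀ y ∈ S, y.1 = (x : Σ i, α i).1 → y = x := by
  constructor
  · rintro ⟨hmin, hmax⟩ y hy hyx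
    rcases le_or_le_of_fst_eq hyx with h | h
    · exact congrArg Subtype.val (le_antisymm (a := ⟨y, hy⟩) h (hmin h))
    · exact congrArg Subtype.val (le_antisymm (a := ⟨y, hy⟩) (hmax h) h)
  · intro h
    refine ⟨fun y hy => ?_, fun y hy => ?_⟩
    · rw [Subtype.ext (h y y.2 (le_def.1 hy).1)]
    · rw [Subtype.ext (h y y.2 (le_def.1 hy).1.symm)]

theorem val_image_isolatedPoints {J : Set ι} (hJ : ∀ j ∈ J, Nontrivial (α j))
    {P : Set (Σ i, α i)} (hP : P.InjOn Sigma.fst) (hPJ : ∀ x ∈ P, x.1 ∉ J) :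
    Subtype.val '' isolatedPoints ↥(Sigma.fst ⁻¹' J ∪ P) = P := by
  ext x
  constructor
  · rintro ⟨⟨⟨i, a⟩, hxJ | hxP⟩, hiso, rfl⟩
    · have := hJ i hxJ
      obtain ⟨b, hb⟩ := exists_ne a
      exact absurd (mem_isolatedPoints_iff.1 hiso ⟨i, b⟩ (Or.inl hxJ) rfl) (by simpa using hb)
    · exact hxP
  · intro hx
    refine ⟨⟨x, Or.inr hx⟩, mem_isolatedPoints_iff.2 fun y hy hyx => ?_, rfl⟩
    rcases hy with hyJ | hyP
    · exact absurd (hyx ▸ hyJ) (hPJ x hx)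
    · exact hP hyP hx hyx

end Sigma

theorem nonempty_orderEmbedding_of_subsingleton {α β : Type*} [PartialOrder α] [Subsingleton α]
    [Preorder β] [Nonempty β] : Nonempty (α ↪o β) :=
  ⟨OrderEmbedding.ofMapLEIff (fun _ => Classical.arbitrary β) fun x y => by
    simp [Subsingleton.elim x y]⟩

theorem exists_injOn_range_union_of_countable {I : Type*} {g : ℕ → I} (hinj : Injective g)
    {T : Set I} (hT : T.Countable) : ∃ ν : I → ℕ, InjOn ν (range g ∪ T) ∧ ∀ n, n ≤ ν (g n) := by
  classical
  obtain ⟨e, he⟩ := countable_iff_exists_injOn.1 hT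
  refine ⟨fun i => if i ∈ range g then 2 * invFun g i else 2 * e i + 1, ?_, fun n => ?_⟩
  · intro i hi j hj hij
    by_cases hig : i ∈ range g <;> by_cases hjg : j ∈ range g <;>
      simp only [hig, hjg, if_true, if_false] at hij
    · rw [← invFun_eq hig, ← invFun_eq hjg, show invFun g i = invFun g j by omega]
    · omega
    · omega
    · exact he (hi.resolve_left hig) (hj.resolve_left hjg) (by omega)
  · simp only [mem_range_self, if_true, leftInverse_invFun hinj n]
    omega

section IncreasingSequence

variable {I : Type*} {C : I → Type*} [∀ i, LinearOrder (C i)] {g : ℕ → I}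

def collapseInitial (g : ℕ → I) (p : ∀ n, C (g n)) (k : ℕ) : Set (Σ i, C i) :=
  Sigma.fst ⁻¹' ({i | Nontrivial (C i)} \ g '' Iio k) ∪ (fun n => ⟨g n, p n⟩) '' Iio k

theorem ncard_isolatedPoints_collapseInitial (hinj : Injective g) (p : ∀ n, C (g n)) (k : ℕ) :
    (isolatedPoints (collapseInitial g p k)).ncard = k := by
  have hpt : Injective fun n => (⟨g n, p n⟩ : Σ i, C i) := fun m n h =>
    hinj (congrArg Sigma.fst h)
  rw [← ncard_image_of_injective _ Subtype.val_injective, collapseInitial,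
    Sigma.val_image_isolatedPoints (fun j hj => hj.1), ncard_image_of_injective _ hpt,
    ncard_Iio_nat]
  · rintro _ ⟨m, -, rfl⟩ _ ⟨n, -, rfl⟩ h
    obtain rfl := hinj h
    rfl
  · rintro _ ⟨n, hn, rfl⟩ hJ
    exact hJ.2 ⟨n, hn, rfl⟩

theorem exists_injective_nontrivial_index_map (htriv : {i | Subsingleton (C i)}.Countable)
    (hinj : Injective g) (hnt : ∀ n, Nontrivial (C (g n)))
    (hinc : ∀ n, Nonempty (C (g n) ↪o C (g (n + 1)))) (k : ℕ) :
    ∃ φ : I → I, Injective φ ∧ (∀ i, Nonempty (C i ↪o C (φ i))) ∧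
      ∀ i, φ i ∈ {i | Nontrivial (C i)} \ g '' Iio k := by
  classical
  obtain ⟨ν, hν, hνg⟩ := exists_injOn_range_union_of_countable hinj htriv
  set A := range g ∪ {i | Subsingleton (C i)}
  obtain ⟨φ, hφA, hφA'⟩ : ∃ φ : I → I, (∀ i ∈ A, φ i = g (k + ν i)) ∧ ∀ i ∉ A, φ i = i :=
    ⟨fun i => if i ∈ A then g (k + ν i) else i, fun i hi => if_pos hi, fun i hi => if_neg hi⟩
  refine ⟨φ, fun i j h => ?_, fun i => ?_, fun i => ?_⟩
  · by_cases hi : i ∈ A <;> by_cases hj : j ∈ A <;>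
      simp only [hφA, hφA', hi, hj, not_false_eq_true] at h
    · exact hν hi hj (by simpa using hinj h)
    · exact absurd (Or.inl ⟨_, h⟩) hj
    · exact absurd (Or.inl ⟨_, h.symm⟩) hi
    · exact h
  · by_cases hi : i ∈ A
    · rw [hφA i hi]
      rcases hi with ⟨n, rfl⟩ | hsub
      · exact nonempty_orderEmbedding_of_le (α := fun n => C (g n)) hinc
          ((hνg n).trans (Nat.le_add_left _ _))
      · have : Subsingleton (C i) := hsub
        have := (hnt (k + ν i)).to_nonempty
        exact nonempty_orderEmbedding_of_subsingleton
    · rw [hφA' i hi]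
      exact ⟨RelEmbedding.refl _⟩
  · by_cases hi : i ∈ A
    · rw [hφA i hi]
      exact ⟨hnt _, fun ⟨n, hn, h⟩ => by have := hinj h; simp only [mem_Iio] at hn; omega⟩
    · rw [hφA' i hi]
      exact ⟨not_subsingleton_iff_nontrivial.1 fun h => hi (Or.inr h),
        fun ⟨n, _, h⟩ => hi (Or.inl ⟨n, h⟩)⟩

theorem equimorphic_collapseInitial (htriv : {i | Subsingleton (C i)}.Countable)
    (hinj : Injective g) (hnt : ∀ n, Nontrivial (C (g n)))
    (hinc : ∀ n, Nonempty (C (g n) ↪o C (g (n + 1)))) (p : ∀ n, C (g n)) (k : ℕ) :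
    Equimorphic (collapseInitial g p k) (Σ i, C i) := by
  obtain ⟨φ, hφ, hC, hJ⟩ := exists_injective_nontrivial_index_map htriv hinj hnt hinc k
  refine ⟨⟨OrderEmbedding.subtype _⟩, Sigma.nonempty_orderEmbedding_subtype hφ hC ?_⟩
  rintro x ⟨i, hi⟩
  exact Or.inl (hi ▸ hJ i : x.1 ∈ _)

end IncreasingSequence

theorem sib_infinite_of_increasing_sequence_general (I : Type) (C : I → Type)
    [∀ i, LinearOrder (C i)]
    (htriv : {i | Subsingleton (C i)}.Countable)
    (g : ℕ → I) (hinj : Function.Injective g)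
    (hnt : ∀ n, Nontrivial (C (g n)))
    (hinc : ∀ n, Nonempty (C (g n) ↪o C (g (n + 1)))) :
    ℵ₀ ≤ sibNumber (Σ i, C i) := by
  let p : ∀ n, C (g n) := fun n => (hnt n).to_nonempty.some
  let sibling (k : ℕ) : Quotient (sibSetoid (Σ i, C i)) :=
    ⟦⟨collapseInitial g p k, equimorphic_collapseInitial htriv hinj hnt hinc p k⟩⟧
  have hsibling : Injective sibling := fun k l h => by
    obtain ⟨e⟩ : Nonempty (collapseInitial g p k ≃o collapseInitial g p l) := Quotient.exact h
    simpa only [ncard_isolatedPoints_collapseInitial hinj] using e.ncard_isolatedPoints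
  simpa [sibNumber] using mk_le_of_injective hsibling

theorem sib_infinite_of_increasing_sequence (I : Type) (C : I → Type)
    [∀ i, LinearOrder (C i)] [∀ i, Nonempty (C i)]
    (htriv : {i | Subsingleton (C i)}.Countable)
    (g : ℕ → I) (hinj : Function.Injective g)
    (hnt : ∀ n, Nontrivial (C (g n)))
    (hinc : ∀ n, Nonempty (C (g n) ↪o C (g (n + 1)))) :
    ℵ₀ ≤ sibNumber (Σ i, C i) :=
  sib_infinite_of_increasing_sequence_general I C htriv g hinj hnt hinc
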